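/- If d and e are two strictly increasing injective partial functions on ordinals that are each restrictions of some E_β^γ or of an inverse of one, and both d and e are increasing, then the inverses of d and e agree on Y = ran(d) ∩ ran(e): for every ordinal y ∈ Y, d⁻¹(y) = e⁻¹(y). -/

import Mathlib

/-- The function `E_β^γ : ℶ_β → Ord`, `E_β^γ(ξ) = ℶ_β · (γ+1) + ξ`
(ordinal multiplication and addition). -/
noncomputable def Efun (β γ ξ : Ordinal) : Ordinal :=
  (Cardinal.beth β).ord * (γ + 1) + ξ

/-- The graph of `E_β^γ`, as a set of pairs of ordinals. -/
noncomputable def Egraph (β γ : Ordinal) : Set (Ordinal × Ordinal) :=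
  {p | p.1 < (Cardinal.beth β).ord ∧ p.2 = Efun β γ p.1}

/-- If `β < β'`, the ranges of `E_β^γ` and `E_{β'}^{γ'}` cannot intersect. -/
lemma Efun_lt_aux {β γ β' γ' x x' : Ordinal}
    (hγ : γ < (Cardinal.beth (β + 1)).ord)
    (hx : x < (Cardinal.beth β).ord)
    (heq : Efun β γ x = Efun β' γ' x') (hlt : β < β') : False := by
  have hy1 : Efun β γ x < (Cardinal.beth β).ord * (γ + 1 + 1) := by
    rw [Ordinal.add_one_eq_succ (γ + 1), Ordinal.mul_succ]
    exact add_lt_add_right hx _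
  have h2 : γ + 1 + 1 < (Cardinal.beth (β + 1)).ord := by
    have hl := Cardinal.isSuccLimit_ord (Cardinal.aleph0_le_beth (β + 1))
    exact hl.add_one_lt (hl.add_one_lt hγ)
  have h3 : (Cardinal.beth β).ord * (γ + 1 + 1) < (Cardinal.beth (β + 1)).ord := by
    rw [Cardinal.lt_ord, Ordinal.card_mul]
    exact Cardinal.mul_lt_of_lt (Cardinal.aleph0_le_beth _)
      (by rw [Cardinal.card_ord]; exact Cardinal.beth_lt_beth.2 (lt_add_one β))
      (Cardinal.lt_ord.1 h2)
  have h4 : (Cardinal.beth (β + 1)).ord ≤ (Cardinal.beth β').ord :=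
    Cardinal.ord_le_ord.2 (Cardinal.beth_le_beth.2 (Order.add_one_le_of_lt hlt))
  have h5 : (Cardinal.beth β').ord ≤ Efun β' γ' x' := by
    calc (Cardinal.beth β').ord = (Cardinal.beth β').ord * 1 := (mul_one _).symm
    _ ≤ (Cardinal.beth β').ord * (γ' + 1) :=
        mul_le_mul_right (by rw [Ordinal.add_one_eq_succ, ← Ordinal.succ_zero]; exact Order.succ_le_of_lt (Order.lt_succ_of_le zero_le) : (1 : Ordinal) ≤ γ' + 1) _
    _ ≤ Efun β' γ' x' := le_add_of_nonneg_right zero_le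
  exact absurd heq (ne_of_lt (lt_of_lt_of_le (hy1.trans h3) (h4.trans h5)))

/-- If `d` and `e` are increasing members of the family `𝓔` (i.e. restrictions of some
`E_β^γ`, viewed as sets of pairs), then their inverses agree on `Y = ran d ∩ ran e`:
whenever `(x, y) ∈ d` and `(x', y) ∈ e`, we have `x = x'`. -/
theorem stmt4 (κ : Cardinal) (hκ : κ.IsInaccessible) (β γ β' γ' : Ordinal)
    (hβ : β < κ.ord) (hβ' : β' < κ.ord)
    (hγ : γ < (Cardinal.beth (β + 1)).ord) (hγ' : γ' < (Cardinal.beth (β' + 1)).ord)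
    (d e : Set (Ordinal × Ordinal)) (hd : d ⊆ Egraph β γ) (he : e ⊆ Egraph β' γ') :
    ∀ y x x' : Ordinal, (x, y) ∈ d → (x', y) ∈ e → x = x' := by
  intro y x x' hxy hx'y
  obtain ⟨hx, hy⟩ := hd hxy
  obtain ⟨hx', hy'⟩ := he hx'y
  simp only at hx hy hx' hy'
  have heq : Efun β γ x = Efun β' γ' x' := hy ▸ hy'
  -- First, β = β'
  have hββ' : β = β' := by
    rcases lt_trichotomy β β' with h | h | h
    · exact absurd (Efun_lt_aux hγ hx heq h) (fun f => f.elim)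
    · exact h
    · exact absurd (Efun_lt_aux hγ' hx' heq.symm h) (fun f => f.elim)
  subst hββ'
  set b := (Cardinal.beth β).ord with hb
  have hb0 : b ≠ 0 := by
    intro h
    exact Cardinal.beth_ne_zero β
      (by rw [← Cardinal.card_ord (Cardinal.beth β), ← hb, h, Ordinal.card_zero])
  -- γ = γ' by division
  have hγγ' : γ = γ' := by
    have h1 : Efun β γ x / b = γ + 1 := by
      rw [Efun, Ordinal.mul_add_div _ hb0, Ordinal.div_eq_zero_of_lt hx, add_zero]
    have h2 : Efun β γ' x' / b = γ' + 1 := by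
      rw [Efun, Ordinal.mul_add_div _ hb0, Ordinal.div_eq_zero_of_lt hx', add_zero]
    have h3 := h1.symm.trans (heq ▸ h2)
    rw [Ordinal.add_one_eq_succ, Ordinal.add_one_eq_succ] at h3
    exact Order.succ_injective h3
  subst hγγ'
  exact (add_right_inj (b * (γ + 1))).1 heq
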